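/- arXiv:1609.05772 — 6 statements merged into one kernel-verified Lean document; each statement's English description precedes it below -/
import Mathlib

section
/- Let R, M be positive integers with M ≥ R, let H be an R×M real matrix of rank R each of whose columns sums to 1, and let A be an invertible R×R real matrix such that each column of the matrix A⁻¹·H also sums to 1. Then each column of A sums to 1, i.e. 1_Rᵀ·A = 1_Rᵀ where 1_R denotes the all-ones column vector of length R. -/
/-! Column sums are the row vector `1 ᵥ* ·`. Full row rank makes `v ↦ v ᵥ* H` injective, and
`(1 ᵥ* A⁻¹) ᵥ* H = 1 = 1 ᵥ* H`, so `1 ᵥ* A⁻¹ = 1`; multiplying on the right by `A` gives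
`1 ᵥ* A = 1`. -/

open Matrix

namespace Matrix

variable {m n K : Type*} [Fintype m] [Field K]

theorem linearIndependent_row_of_rank_eq_card [Fintype n] {H : Matrix m n K}
    (h : H.rank = Fintype.card m) : LinearIndependent K H.row := by
  rw [rank_eq_finrank_span_row] at h
  rw [linearIndependent_iff_card_eq_finrank_span, Set.finrank, h]

theorem one_vecMul_eq_one_iff {H : Matrix m n K} : 1 ᵥ* H = 1 ↔ ∀ j, ∑ i, H i j = 1 := by
  simp only [funext_iff, vecMul, dotProduct, Pi.one_apply, one_mul]

theorem vecMul_eq_self_of_vecMul_inv_mul_eq [DecidableEq m] {A : Matrix m m K} (hA : IsUnit A)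
    {H : Matrix m n K} (hH : LinearIndependent K H.row) {v : m → K}
    (h : v ᵥ* (A⁻¹ * H) = v ᵥ* H) : v ᵥ* A = v := by
  have hinv : v ᵥ* A⁻¹ = v := vecMul_injective_iff.mpr hH (by simpa only [vecMul_vecMul] using h)
  nth_rw 1 [← hinv]
  rw [vecMul_vecMul, nonsing_inv_mul A ((isUnit_iff_isUnit_det A).mp hA), vecMul_one]

end Matrix

theorem stmt_1_general (R M : ℕ)
    (H : Matrix (Fin R) (Fin M) ℝ) (hrank : H.rank = R)
    (hH : ∀ m : Fin M, ∑ r : Fin R, H r m = 1)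
    (A : Matrix (Fin R) (Fin R) ℝ) (hA : IsUnit A)
    (hAH : ∀ m : Fin M, ∑ r : Fin R, (A⁻¹ * H) r m = 1) :
    (fun _ => (1 : ℝ)) ᵥ* A = fun _ => (1 : ℝ) := by
  have hrow : LinearIndependent ℝ H.row :=
    linearIndependent_row_of_rank_eq_card (by rw [hrank, Fintype.card_fin])
  show (1 : Fin R → ℝ) ᵥ* A = 1
  exact vecMul_eq_self_of_vecMul_inv_mul_eq hA hrow
    (by rw [one_vecMul_eq_one_iff.mpr hAH, one_vecMul_eq_one_iff.mpr hH])

/-- If `H` is an `R × M` matrix of rank `R` (with `M ≥ R`) each of whose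
columns sums to 1, and `A` is invertible with each column of `A⁻¹ * H` also summing to 1,
then each column of `A` sums to 1, i.e. `1ᵀ ⬝ A = 1ᵀ`. -/
theorem stmt_1 (R M : ℕ) (hR : 0 < R) (hM : 0 < M) (hRM : R ≤ M)
    (H : Matrix (Fin R) (Fin M) ℝ) (hrank : H.rank = R)
    (hH : ∀ m : Fin M, ∑ r : Fin R, H r m = 1)
    (A : Matrix (Fin R) (Fin R) ℝ) (hA : IsUnit A)
    (hAH : ∀ m : Fin M, ∑ r : Fin R, (A⁻¹ * H) r m = 1) :
    (fun _ => (1 : ℝ)) ᵥ* A = fun _ => (1 : ℝ) :=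
  stmt_1_general R M H hrank hH A hA hAH
end

section
/- Let W be an N×R nonnegative real matrix and let H be an R×M row-stochastic real matrix, with R ≥ 2. Suppose there exist r₁ ≠ r₂ in {1,…,R} such that {j : H_{r₁ j} ≠ 0} ⊆ {j : H_{r₂ j} ≠ 0} (the support of row r₁ of H is contained in the support of row r₂ of H). Then there exists an invertible R×R real matrix A that is NOT a permutation matrix such that W·A is nonnegative, A⁻¹·H is nonnegative, and each row of A⁻¹·H sums to 1. -/
open Matrix

/-- A square real matrix is a permutation matrix if it is the identity matrix with its
columns rearranged, i.e. `A i j = 1` if `σ i = j` and `0` otherwise for some permutation `σ`. -/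
def IsPermutationMatrix {R : ℕ} (A : Matrix (Fin R) (Fin R) ℝ) : Prop :=
  ∃ σ : Equiv.Perm (Fin R), ∀ i j, A i j = if σ i = j then (1 : ℝ) else 0

/-!
If the support of `h₁ := H r₁` lies in that of `h₂ := H r₂`, then `h₂ - t h₁ ≥ 0` for all small
`t > 0`, so for `t < 1` also `h₂' := (h₂ - t h₁) / (1 - t)` is a probability vector. Let `A` be
the identity with row `r₂` replaced by `t e_{r₁} + (1 - t) e_{r₂}`. Since `h₂ = t h₁ + (1 - t) h₂'`,
`A⁻¹ H` is `H` with row `r₂` replaced by `h₂'`. This `A` is nonnegative, so `W A ≥ 0`, and its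
entry `t ∉ {0, 1}` shows that it is not a permutation matrix.
-/

open Filter Topology

theorem eventually_nhdsGT_forall_mul_le {ι : Type*} [Finite ι] {f g : ι → ℝ}
    (hg : ∀ j, 0 ≤ g j) (hfg : Function.support f ⊆ Function.support g) :
    ∀ᶠ t in 𝓝[>] 0, ∀ j, t * f j ≤ g j := by
  refine eventually_all.2 fun j => ?_
  rcases eq_or_ne (f j) 0 with hf | hf
  · simp [hf, hg j]
  have hgj : 0 < g j := (hg j).lt_of_ne' (hfg hf)
  have hlim : Tendsto (fun t : ℝ => t * f j) (𝓝 0) (𝓝 0) := by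
    simpa using (continuous_mul_const (f j)).tendsto 0
  exact nhdsWithin_le_nhds (hlim.eventually (eventually_le_nhds hgj))

section MixRow

variable {n m 𝕜 : Type*} [Fintype n] [DecidableEq n] [Field 𝕜] {i j : n} {t : 𝕜}

/-- The identity matrix with row `j` replaced by `t • eᵢ + (1 - t) • eⱼ`; the factorisation makes
its inverse explicit. -/
def mixRow (i j : n) (t : 𝕜) : Matrix n n 𝕜 :=
  transvection j i t * diagonal (Function.update 1 j (1 - t))

theorem mixRow_apply_of_ne (hij : i ≠ j) : mixRow i j t j i = t := by
  simp [mixRow, transvection, hij, hij.symm]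

theorem mixRow_left_inverse (hij : i ≠ j) (ht : t ≠ 1) :
    diagonal (Function.update 1 j (1 - t)⁻¹) * transvection j i (-t) * mixRow i j t = 1 := by
  rw [mixRow, Matrix.mul_assoc, ← Matrix.mul_assoc (transvection j i (-t)),
    transvection_mul_transvection_same _ _ hij.symm, neg_add_cancel, transvection_zero,
    Matrix.one_mul, diagonal_mul_diagonal, ← diagonal_one]
  congr 1
  ext a
  rcases eq_or_ne a j with rfl | ha
  · simp [inv_mul_cancel₀ (sub_ne_zero.2 ht.symm)]
  · simp [ha]

theorem inv_mixRow (hij : i ≠ j) (ht : t ≠ 1) :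
    (mixRow i j t)⁻¹ = diagonal (Function.update 1 j (1 - t)⁻¹) * transvection j i (-t) :=
  inv_eq_left_inv (mixRow_left_inverse hij ht)

theorem isUnit_mixRow (hij : i ≠ j) (ht : t ≠ 1) : IsUnit (mixRow i j t) :=
  (isUnit_iff_isUnit_det _).2 (isUnit_det_of_left_inverse (mixRow_left_inverse hij ht))

theorem inv_mixRow_mul_apply_self (hij : i ≠ j) (ht : t ≠ 1) (M : Matrix n m 𝕜) (b : m) :
    ((mixRow i j t)⁻¹ * M) j b = (1 - t)⁻¹ * (M j b - t * M i b) := by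
  rw [inv_mixRow hij ht, Matrix.mul_assoc, diagonal_mul, transvection_mul_apply_same]
  simp [sub_eq_add_neg]

theorem inv_mixRow_mul_apply_of_ne (hij : i ≠ j) (ht : t ≠ 1) (M : Matrix n m 𝕜) {a : n}
    (ha : a ≠ j) (b : m) : ((mixRow i j t)⁻¹ * M) a b = M a b := by
  rw [inv_mixRow hij ht, Matrix.mul_assoc, diagonal_mul, transvection_mul_apply_of_ne _ _ _ _ ha]
  simp [ha]

theorem mixRow_nonneg [LinearOrder 𝕜] [IsStrictOrderedRing 𝕜] (ht₀ : 0 ≤ t) (ht₁ : t ≤ 1)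
    (a b : n) : 0 ≤ mixRow i j t a b := by
  rw [mixRow, mul_diagonal]
  refine mul_nonneg ?_ ?_
  · simp only [transvection, Matrix.add_apply, one_apply, single_apply]
    split_ifs <;> positivity
  · rcases eq_or_ne b j with rfl | hb
    · simpa using ht₁
    · simp [hb]

end MixRow

theorem not_isPermutationMatrix_of_apply {R : ℕ} {A : Matrix (Fin R) (Fin R) ℝ} {a b : Fin R}
    (h₀ : A a b ≠ 0) (h₁ : A a b ≠ 1) : ¬ IsPermutationMatrix A := by
  rintro ⟨σ, hσ⟩
  rw [hσ] at h₀ h₁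
  split_ifs at h₀ h₁ <;> simp_all

theorem stmt_3_general (N R M : ℕ)
    (W : Matrix (Fin N) (Fin R) ℝ) (hW : ∀ i r, 0 ≤ W i r)
    (H : Matrix (Fin R) (Fin M) ℝ) (hHnn : ∀ r j, 0 ≤ H r j)
    (hHrow : ∀ r : Fin R, ∑ j : Fin M, H r j = 1)
    (r₁ r₂ : Fin R) (hne : r₁ ≠ r₂)
    (hsub : {j : Fin M | H r₁ j ≠ 0} ⊆ {j : Fin M | H r₂ j ≠ 0}) :
    ∃ A : Matrix (Fin R) (Fin R) ℝ, IsUnit A ∧ ¬ IsPermutationMatrix A ∧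
      (∀ i r, 0 ≤ (W * A) i r) ∧
      (∀ r j, 0 ≤ (A⁻¹ * H) r j) ∧
      (∀ r : Fin R, ∑ j : Fin M, (A⁻¹ * H) r j = 1) := by
  obtain ⟨t, ⟨hle, ht₁⟩, ht₀ : 0 < t⟩ := ((eventually_nhdsGT_forall_mul_le (hHnn r₂) hsub).and
    ((eventually_lt_nhds one_pos).filter_mono nhdsWithin_le_nhds) |>.and
    self_mem_nhdsWithin).exists
  have ht : t ≠ 1 := ht₁.ne
  have hA := mixRow_nonneg (i := r₁) (j := r₂) ht₀.le ht₁.le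
  refine ⟨mixRow r₁ r₂ t, isUnit_mixRow hne ht, ?_, ?_, ?_, ?_⟩
  · have hentry : mixRow r₁ r₂ t r₂ r₁ = t := mixRow_apply_of_ne hne
    exact not_isPermutationMatrix_of_apply (hentry.trans_ne ht₀.ne') (hentry.trans_ne ht)
  · intro i r
    rw [mul_apply']
    exact dotProduct_nonneg_of_nonneg (hW i) (hA · r)
  · intro r j
    rcases eq_or_ne r r₂ with rfl | hr
    · rw [inv_mixRow_mul_apply_self hne ht]
      exact mul_nonneg (inv_nonneg.2 (sub_nonneg.2 ht₁.le)) (sub_nonneg.2 (hle j))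
    · rw [inv_mixRow_mul_apply_of_ne hne ht H hr]
      exact hHnn r j
  · intro r
    rcases eq_or_ne r r₂ with rfl | hr
    · simp_rw [inv_mixRow_mul_apply_self hne ht, ← Finset.mul_sum, Finset.sum_sub_distrib,
        ← Finset.mul_sum, hHrow, mul_one]
      exact inv_mul_cancel₀ (sub_ne_zero.2 ht.symm)
    · simp_rw [inv_mixRow_mul_apply_of_ne hne ht H hr, hHrow]

/-- If `W` is nonnegative, `H` is row-stochastic with `R ≥ 2`, and the
support of row `r₁` of `H` is contained in the support of row `r₂` of `H` for some
`r₁ ≠ r₂`, then there is an invertible non-permutation matrix `A` with `W * A ≥ 0`,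
`A⁻¹ * H ≥ 0` and `A⁻¹ * H` row-stochastic. -/
theorem stmt_3 (N R M : ℕ) (hR : 2 ≤ R)
    (W : Matrix (Fin N) (Fin R) ℝ) (hW : ∀ i r, 0 ≤ W i r)
    (H : Matrix (Fin R) (Fin M) ℝ) (hHnn : ∀ r j, 0 ≤ H r j)
    (hHrow : ∀ r : Fin R, ∑ j : Fin M, H r j = 1)
    (r₁ r₂ : Fin R) (hne : r₁ ≠ r₂)
    (hsub : {j : Fin M | H r₁ j ≠ 0} ⊆ {j : Fin M | H r₂ j ≠ 0}) :
    ∃ A : Matrix (Fin R) (Fin R) ℝ, IsUnit A ∧ ¬ IsPermutationMatrix A ∧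
      (∀ i r, 0 ≤ (W * A) i r) ∧
      (∀ r j, 0 ≤ (A⁻¹ * H) r j) ∧
      (∀ r : Fin R, ∑ j : Fin M, (A⁻¹ * H) r j = 1) :=
  stmt_3_general N R M W hW H hHnn hHrow r₁ r₂ hne hsub
end

section
/- Let W be an N×R nonnegative real matrix and let H be an R×M row-stochastic real matrix, with R ≥ 2. Suppose there exist r₁ ≠ r₂ in {1,…,R} such that {i : W_{i r₁} ≠ 0} ⊆ {i : W_{i r₂} ≠ 0} (the support of column r₁ of W is contained in the support of column r₂ of W). Then there exists an invertible R×R real matrix A that is NOT a permutation matrix such that W·A is nonnegative, A⁻¹·H is nonnegative, and each row of A⁻¹·H sums to 1. -/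
open Matrix

open Filter Topology

theorem exists_pos_forall_mul_le {ι : Type*} [Finite ι] {f g : ι → ℝ} (hg : ∀ i, 0 ≤ g i)
    (hfg : ∀ i, f i ≠ 0 → g i ≠ 0) : ∃ ε > 0, ∀ i, ε * f i ≤ g i := by
  have h : ∀ i, ∀ᶠ ε in 𝓝[>] (0 : ℝ), ε * f i ≤ g i := by
    intro i
    rcases (hg i).eq_or_lt with hgi | hgi
    · simp [not_imp_not.1 (hfg i) hgi.symm, ← hgi]
    · have hlim : Tendsto (fun ε : ℝ => ε * f i) (𝓝 0) (𝓝 0) := by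
        simpa using (continuous_mul_const (f i)).tendsto 0
      exact nhdsWithin_le_nhds ((hlim.eventually (gt_mem_nhds hgi)).mono fun _ => le_of_lt)
  exact ((eventually_all.2 h).and self_mem_nhdsWithin).exists.imp fun ε h => ⟨h.2, h.1⟩

theorem IsPermutationMatrix.apply_eq_zero_or_one {R : ℕ} {A : Matrix (Fin R) (Fin R) ℝ}
    (hA : IsPermutationMatrix A) (i j : Fin R) : A i j = 0 ∨ A i j = 1 := by
  obtain ⟨σ, hσ⟩ := hA
  rw [hσ]
  split_ifs <;> simp

namespace Matrix

variable {n α : Type*} [DecidableEq n] [CommRing α]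

def mixRows (i j : n) (t : α) : Matrix n n α :=
  1 + t • vecMulVec (Pi.single i 1) (Pi.single i 1 - Pi.single j 1)

variable {i j : n}

theorem mixRows_apply_self (hij : i ≠ j) (t : α) : mixRows i j t i i = 1 + t := by
  simp [mixRows, vecMulVec_apply, Pi.single_eq_of_ne hij]

variable [Fintype n]

theorem mixRows_mul_mixRows (hij : i ≠ j) (s t : α) :
    mixRows i j s * mixRows i j t = mixRows i j (s + t + s * t) := by
  have hidem : vecMulVec (Pi.single i (1 : α)) (Pi.single i 1 - Pi.single j 1) *
      vecMulVec (Pi.single i 1) (Pi.single i 1 - Pi.single j 1) =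
      vecMulVec (Pi.single i 1) (Pi.single i 1 - Pi.single j 1) := by
    rw [vecMulVec_mul_vecMulVec, sub_dotProduct, single_dotProduct, single_dotProduct,
      Pi.single_eq_same, Pi.single_eq_of_ne hij.symm]
    simp
  simp only [mixRows, add_mul, mul_add, one_mul, mul_one, smul_mul_smul_comm, hidem, add_smul]
  abel

theorem mul_mixRows_apply {m : Type*} (W : Matrix m n α) (t : α) (k : m) (c : n) :
    (W * mixRows i j t) k c = W k c + t * W k i * (Pi.single i 1 - Pi.single j 1 : n → α) c := by
  rw [mixRows, Matrix.mul_add, Matrix.mul_one, Matrix.mul_smul, mul_vecMulVec, mulVec_single_one]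
  simp [vecMulVec_apply, mul_assoc]

theorem mixRows_mul_apply {m : Type*} (H : Matrix n m α) (t : α) (r : n) (c : m) :
    (mixRows i j t * H) r c = H r c + t * (Pi.single i 1 : n → α) r * (H i c - H j c) := by
  rw [mixRows, Matrix.add_mul, Matrix.one_mul, Matrix.smul_mul, vecMulVec_mul, sub_vecMul,
    single_one_vecMul, single_one_vecMul]
  simp [vecMulVec_apply, mul_assoc]

theorem mixRows_mul_mixRows_neg_div {K : Type*} [Field K] (hij : i ≠ j)
    {t : K} (ht : 1 + t ≠ 0) : mixRows i j t * mixRows i j (-(t / (1 + t))) = 1 := by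
  rw [mixRows_mul_mixRows hij, show t + -(t / (1 + t)) + t * -(t / (1 + t)) = 0 by
    field_simp; ring]
  simp [mixRows]

section Ordered

variable {m : Type*} [LinearOrder α] [IsStrictOrderedRing α]

theorem mul_mixRows_nonneg {W : Matrix m n α} (hW : ∀ k c, 0 ≤ W k c) (hij : i ≠ j) {t : α}
    (ht : 0 ≤ t) (hWij : ∀ k, t * W k i ≤ W k j) (k : m) (c : n) :
    0 ≤ (W * mixRows i j t) k c := by
  rw [mul_mixRows_apply, Pi.sub_apply]
  by_cases hc : c = j
  · subst hc
    simp [Pi.single_eq_of_ne hij.symm, hWij k]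
  · have hsingle : 0 ≤ (Pi.single i 1 : n → α) c := by
      rcases eq_or_ne c i with rfl | hci <;> simp [*]
    rw [Pi.single_eq_of_ne hc, sub_zero]
    have := hW k c
    have := mul_nonneg (mul_nonneg ht (hW k i)) hsingle
    linarith

theorem mixRows_mul_nonneg {H : Matrix n m α} (hH : ∀ r c, 0 ≤ H r c) {t : α} (ht₁ : -1 ≤ t)
    (ht₀ : t ≤ 0) (r : n) (c : m) : 0 ≤ (mixRows i j t * H) r c := by
  rw [mixRows_mul_apply]
  rcases eq_or_ne r i with rfl | hri
  · have := mul_nonneg (neg_nonneg.2 ht₀) (hH j c)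
    have := mul_nonneg (neg_le_iff_add_nonneg'.1 ht₁) (hH r c)
    simp only [Pi.single_eq_same, mul_one]
    nlinarith
  · simp [Pi.single_eq_of_ne hri, hH r c]

end Ordered

theorem sum_mixRows_mul_apply {m : Type*} [Fintype m] {H : Matrix n m α}
    (hH : ∀ r, ∑ c, H r c = 1) (t : α) (r : n) : ∑ c, (mixRows i j t * H) r c = 1 := by
  simp only [mixRows_mul_apply, Finset.sum_add_distrib, ← Finset.mul_sum, Finset.sum_sub_distrib,
    hH, sub_self, mul_zero, add_zero]

end Matrix

theorem not_isPermutationMatrix_mixRows {R : ℕ} {i j : Fin R} (hij : i ≠ j) {t : ℝ}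
    (ht : 0 < t) : ¬IsPermutationMatrix (mixRows i j t) := fun hP => by
  have := hP.apply_eq_zero_or_one i i
  rw [mixRows_apply_self hij] at this
  rcases this with h | h <;> linarith

theorem stmt_4_general (N R M : ℕ)
    (W : Matrix (Fin N) (Fin R) ℝ) (hW : ∀ i r, 0 ≤ W i r)
    (H : Matrix (Fin R) (Fin M) ℝ) (hHnn : ∀ r j, 0 ≤ H r j)
    (hHrow : ∀ r : Fin R, ∑ j : Fin M, H r j = 1)
    (r₁ r₂ : Fin R) (hne : r₁ ≠ r₂)
    (hsub : {i : Fin N | W i r₁ ≠ 0} ⊆ {i : Fin N | W i r₂ ≠ 0}) :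
    ∃ A : Matrix (Fin R) (Fin R) ℝ, IsUnit A ∧ ¬ IsPermutationMatrix A ∧
      (∀ i r, 0 ≤ (W * A) i r) ∧
      (∀ r j, 0 ≤ (A⁻¹ * H) r j) ∧
      (∀ r : Fin R, ∑ j : Fin M, (A⁻¹ * H) r j = 1) := by
  obtain ⟨ε, hε, hεW⟩ := exists_pos_forall_mul_le (fun k => hW k r₂) fun k hk => hsub hk
  have hinv := mixRows_mul_mixRows_neg_div hne (t := ε) (by positivity)
  have hδ : ε / (1 + ε) ≤ 1 := (div_le_one (by positivity)).2 (by linarith)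
  refine ⟨mixRows r₁ r₂ ε, (isUnit_iff_isUnit_det _).2 (isUnit_det_of_right_inverse hinv),
    not_isPermutationMatrix_mixRows hne hε, mul_mixRows_nonneg hW hne hε.le hεW, ?_, ?_⟩ <;>
    rw [inv_eq_right_inv hinv]
  · exact mixRows_mul_nonneg hHnn (neg_le_neg hδ) (neg_nonpos.2 (by positivity))
  · exact sum_mixRows_mul_apply hHrow _

/-- If `W` is nonnegative, `H` is row-stochastic with `R ≥ 2`, and the
support of column `r₁` of `W` is contained in the support of column `r₂` of `W` for some
`r₁ ≠ r₂`, then there is an invertible non-permutation matrix `A` with `W * A ≥ 0`,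
`A⁻¹ * H ≥ 0` and `A⁻¹ * H` row-stochastic. -/
theorem stmt_4 (N R M : ℕ) (hR : 2 ≤ R)
    (W : Matrix (Fin N) (Fin R) ℝ) (hW : ∀ i r, 0 ≤ W i r)
    (H : Matrix (Fin R) (Fin M) ℝ) (hHnn : ∀ r j, 0 ≤ H r j)
    (hHrow : ∀ r : Fin R, ∑ j : Fin M, H r j = 1)
    (r₁ r₂ : Fin R) (hne : r₁ ≠ r₂)
    (hsub : {i : Fin N | W i r₁ ≠ 0} ⊆ {i : Fin N | W i r₂ ≠ 0}) :
    ∃ A : Matrix (Fin R) (Fin R) ℝ, IsUnit A ∧ ¬ IsPermutationMatrix A ∧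
      (∀ i r, 0 ≤ (W * A) i r) ∧
      (∀ r j, 0 ≤ (A⁻¹ * H) r j) ∧
      (∀ r : Fin R, ∑ j : Fin M, (A⁻¹ * H) r j = 1) :=
  stmt_4_general N R M W hW H hHnn hHrow r₁ r₂ hne hsub
end

section
/- Let N, M be positive integers, let W be an N×2 nonnegative real matrix with W_{i1} > 0 for every i ∈ {1,…,N}, and let H be a 2×M row-stochastic real matrix with H_{2j} > 0 for every j ∈ {1,…,M}. Define a_L = min_{i ∈ {1,…,N}} W_{i2}/W_{i1} and a_H = min_{j ∈ {1,…,M}} H_{1j}/H_{2j}. Then for a real number a, the four inequalities (i) W_{i1}(1−a) ≥ 0, (ii) W_{i1}·a + W_{i2} ≥ 0, (iii) H_{1j} − a·H_{2j} ≥ 0, and (iv) H_{2j} ≥ 0 hold for all i ∈ {1,…,N} and all j ∈ {1,…,M} if and only if −a_L ≤ a ≤ a_H. -/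
/-!
Each of the four constraints is a one-sided linear bound on `a`: (ii) says `-a ≤ W i 1 / W i 0`
and (iii) says `a ≤ H 0 j / H 1 j`, so together they amount to `-a_L ≤ a ≤ a_H`, and (iv) is
automatic. Constraint (i) says `a ≤ 1`, which is implied by `a ≤ a_H`: the two rows of `H` have
the same sum, so `H 0 j ≤ H 1 j` for some `j`, whence `a_H ≤ 1`.
-/

open Finset

section LinearBounds

variable {K : Type*} [Field K] [LinearOrder K] [IsStrictOrderedRing K]

theorem neg_le_div_iff_nonneg_mul_add {w₀ w₁ a : K} (hw₀ : 0 < w₀) :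
    -a ≤ w₁ / w₀ ↔ 0 ≤ w₀ * a + w₁ := by
  rw [le_div_iff₀ hw₀, ← sub_nonneg]
  ring_nf

theorem le_div_iff_nonneg_sub_mul {h₀ h₁ a : K} (hh₁ : 0 < h₁) :
    a ≤ h₀ / h₁ ↔ 0 ≤ h₀ - a * h₁ := by
  rw [le_div_iff₀ hh₁, sub_nonneg]

theorem Finset.inf'_div_le_one_of_sum_le {ι : Type*} {s : Finset ι} (hs : s.Nonempty)
    {f g : ι → K} (hg : ∀ i ∈ s, 0 < g i) (hfg : ∑ i ∈ s, f i ≤ ∑ i ∈ s, g i) :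
    s.inf' hs (fun i => f i / g i) ≤ 1 := by
  obtain ⟨i, hi, hfgi⟩ := exists_le_of_sum_le hs hfg
  exact (inf'_le _ hi).trans ((div_le_one (hg i hi)).2 hfgi)

end LinearBounds

theorem stmt_5_general (N M : ℕ) [NeZero N] [NeZero M]
    (W : Matrix (Fin N) (Fin 2) ℝ)
    (hWpos : ∀ i, 0 < W i 0)
    (H : Matrix (Fin 2) (Fin M) ℝ)
    (hHrow : ∀ r : Fin 2, ∑ j : Fin M, H r j = 1)
    (hHpos : ∀ j, 0 < H 1 j)
    (a : ℝ) :
    (∀ (i : Fin N) (j : Fin M),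
        0 ≤ W i 0 * (1 - a) ∧
        0 ≤ W i 0 * a + W i 1 ∧
        0 ≤ H 0 j - a * H 1 j ∧
        0 ≤ H 1 j) ↔
      (-(Finset.univ.inf' Finset.univ_nonempty fun i : Fin N => W i 1 / W i 0) ≤ a ∧
        a ≤ Finset.univ.inf' Finset.univ_nonempty fun j : Fin M => H 0 j / H 1 j) := by
  have lower_iff : -(univ.inf' univ_nonempty fun i : Fin N => W i 1 / W i 0) ≤ a ↔
      ∀ i, 0 ≤ W i 0 * a + W i 1 := by
    simp only [neg_le, le_inf'_iff, mem_univ, true_imp_iff,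
      neg_le_div_iff_nonneg_mul_add (hWpos _)]
  have upper_iff : a ≤ (univ.inf' univ_nonempty fun j : Fin M => H 0 j / H 1 j) ↔
      ∀ j, 0 ≤ H 0 j - a * H 1 j := by
    simp only [le_inf'_iff, mem_univ, true_imp_iff, le_div_iff_nonneg_sub_mul (hHpos _)]
  have upper_le_one : (univ.inf' univ_nonempty fun j : Fin M => H 0 j / H 1 j) ≤ 1 :=
    inf'_div_le_one_of_sum_le _ (fun j _ => hHpos j) (by rw [hHrow 0, hHrow 1])
  constructor
  · intro h
    exact ⟨lower_iff.2 fun i => (h i 0).2.1, upper_iff.2 fun j => (h 0 j).2.2.1⟩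
  · rintro ⟨hlower, hupper⟩ i j
    have ha : a ≤ 1 := hupper.trans upper_le_one
    exact ⟨mul_nonneg (hWpos i).le (sub_nonneg.2 ha), lower_iff.1 hlower i,
      upper_iff.1 hupper j, (hHpos j).le⟩

/-- Two-factor natural bounds along the `a`-axis: with `b = 0`, the
non-negativity constraints of the stochastic matrix factorization hold for all `i, j`
iff `-a_L ≤ a ≤ a_H`, where `a_L = min_i W i 1 / W i 0` and `a_H = min_j H 0 j / H 1 j`. -/
theorem stmt_5 (N M : ℕ) [NeZero N] [NeZero M]
    (W : Matrix (Fin N) (Fin 2) ℝ) (hW : ∀ i r, 0 ≤ W i r)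
    (hWpos : ∀ i, 0 < W i 0)
    (H : Matrix (Fin 2) (Fin M) ℝ) (hHnn : ∀ r j, 0 ≤ H r j)
    (hHrow : ∀ r : Fin 2, ∑ j : Fin M, H r j = 1)
    (hHpos : ∀ j, 0 < H 1 j)
    (a : ℝ) :
    (∀ (i : Fin N) (j : Fin M),
        0 ≤ W i 0 * (1 - a) ∧
        0 ≤ W i 0 * a + W i 1 ∧
        0 ≤ H 0 j - a * H 1 j ∧
        0 ≤ H 1 j) ↔
      (-(Finset.univ.inf' Finset.univ_nonempty fun i : Fin N => W i 1 / W i 0) ≤ a ∧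
        a ≤ Finset.univ.inf' Finset.univ_nonempty fun j : Fin M => H 0 j / H 1 j) :=
  stmt_5_general N M W hWpos H hHrow hHpos a
end

section
/- Let N, M be positive integers, let W be an N×2 nonnegative real matrix with W_{i2} > 0 for every i ∈ {1,…,N}, and let H be a 2×M row-stochastic real matrix with H_{1j} > 0 for every j ∈ {1,…,M}. Define b_L = min_{i ∈ {1,…,N}} W_{i1}/W_{i2} and b_H = min_{j ∈ {1,…,M}} H_{2j}/H_{1j}. Then for a real number b, the four inequalities (i) W_{i1} + W_{i2}·b ≥ 0, (ii) W_{i2}(1−b) ≥ 0, (iii) H_{1j}(1−b) ≥ 0, and (iv) −H_{1j}·b + H_{2j} ≥ 0 hold for all i ∈ {1,…,N} and all j ∈ {1,…,M} if and only if −b_L ≤ b ≤ b_H. -/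
open Matrix Finset

/-! Constraints (i) and (iv) are, after dividing by the positive entries `W i 1` and `H 0 j`, the
lower bound `-b_L ≤ b` and the upper bound `b ≤ b_H`. Constraints (ii) and (iii) say `b ≤ 1`, which
follows from (iv) by summing over `j`, since both rows of `H` sum to `1`. -/

section RatioBounds

variable {ι : Type*} {s : Finset ι} (hs : s.Nonempty) {f g : ι → ℝ} {b : ℝ}

theorem neg_inf'_div_le_iff (hg : ∀ i ∈ s, 0 < g i) :
    -(s.inf' hs fun i => f i / g i) ≤ b ↔ ∀ i ∈ s, 0 ≤ f i + g i * b := by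
  rw [neg_le, le_inf'_iff]
  refine forall₂_congr fun i hi => ?_
  rw [le_div_iff₀ (hg i hi)]
  constructor <;> intro h <;> linarith

theorem le_inf'_div_iff (hg : ∀ i ∈ s, 0 < g i) :
    b ≤ (s.inf' hs fun i => f i / g i) ↔ ∀ i ∈ s, 0 ≤ -g i * b + f i := by
  rw [le_inf'_iff]
  refine forall₂_congr fun i hi => ?_
  rw [le_div_iff₀ (hg i hi)]
  constructor <;> intro h <;> linarith

end RatioBounds

theorem le_one_of_forall_neg_mul_add_nonneg {ι : Type*} {s : Finset ι} {f g : ι → ℝ} {b : ℝ}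
    (hf : ∑ i ∈ s, f i = 1) (hg : ∑ i ∈ s, g i = 1) (h : ∀ i ∈ s, 0 ≤ -g i * b + f i) :
    b ≤ 1 := by
  have hsum := sum_nonneg h
  rw [sum_add_distrib, ← sum_mul, sum_neg_distrib, hf, hg] at hsum
  linarith

theorem stmt_6_general (N M : ℕ) [NeZero N] [NeZero M]
    (W : Matrix (Fin N) (Fin 2) ℝ)
    (hWpos : ∀ i, 0 < W i 1)
    (H : Matrix (Fin 2) (Fin M) ℝ)
    (hHrow : ∀ r : Fin 2, ∑ j : Fin M, H r j = 1)
    (hHpos : ∀ j, 0 < H 0 j)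
    (b : ℝ) :
    (∀ (i : Fin N) (j : Fin M),
        0 ≤ W i 0 + W i 1 * b ∧
        0 ≤ W i 1 * (1 - b) ∧
        0 ≤ H 0 j * (1 - b) ∧
        0 ≤ -(H 0 j) * b + H 1 j) ↔
      (-(Finset.univ.inf' Finset.univ_nonempty fun i : Fin N => W i 0 / W i 1) ≤ b ∧
        b ≤ Finset.univ.inf' Finset.univ_nonempty fun j : Fin M => H 1 j / H 0 j) := by
  rw [neg_inf'_div_le_iff _ fun i _ => hWpos i, le_inf'_div_iff _ fun j _ => hHpos j]
  constructor
  · intro h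
    exact ⟨fun i _ => (h i 0).1, fun j _ => (h 0 j).2.2.2⟩
  · rintro ⟨hlow, hup⟩ i j
    have hb1 : 0 ≤ 1 - b :=
      sub_nonneg.2 (le_one_of_forall_neg_mul_add_nonneg (hHrow 1) (hHrow 0) hup)
    exact ⟨hlow i (mem_univ i), mul_nonneg (hWpos i).le hb1, mul_nonneg (hHpos j).le hb1,
      hup j (mem_univ j)⟩

/-- Two-factor natural bounds along the `b`-axis: with `a = 0`, the
non-negativity constraints of the stochastic matrix factorization hold for all `i, j`
iff `-b_L ≤ b ≤ b_H`, where `b_L = min_i W i 0 / W i 1` and `b_H = min_j H 1 j / H 0 j`. -/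
theorem stmt_6 (N M : ℕ) [NeZero N] [NeZero M]
    (W : Matrix (Fin N) (Fin 2) ℝ) (hW : ∀ i r, 0 ≤ W i r)
    (hWpos : ∀ i, 0 < W i 1)
    (H : Matrix (Fin 2) (Fin M) ℝ) (hHnn : ∀ r j, 0 ≤ H r j)
    (hHrow : ∀ r : Fin 2, ∑ j : Fin M, H r j = 1)
    (hHpos : ∀ j, 0 < H 0 j)
    (b : ℝ) :
    (∀ (i : Fin N) (j : Fin M),
        0 ≤ W i 0 + W i 1 * b ∧
        0 ≤ W i 1 * (1 - b) ∧
        0 ≤ H 0 j * (1 - b) ∧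
        0 ≤ -(H 0 j) * b + H 1 j) ↔
      (-(Finset.univ.inf' Finset.univ_nonempty fun i : Fin N => W i 0 / W i 1) ≤ b ∧
        b ≤ Finset.univ.inf' Finset.univ_nonempty fun j : Fin M => H 1 j / H 0 j) :=
  stmt_6_general N M W hWpos H hHrow hHpos b
end

section
/- Let W be an N×2 nonnegative real matrix and H a 2×M nonnegative real matrix. Suppose there exist indices j₁ with H_{1 j₁} = 0 and H_{2 j₁} > 0, j₂ with H_{2 j₂} = 0 and H_{1 j₂} > 0, i₁ with W_{i₁ 1} = 0 and W_{i₁ 2} > 0, and i₂ with W_{i₂ 2} = 0 and W_{i₂ 1} > 0. Let a, b be real numbers with 1 − a − b > 0 and suppose that for all i ∈ {1,…,N} and j ∈ {1,…,M}: W_{i1}(1−a) + W_{i2}·b ≥ 0, W_{i1}·a + W_{i2}(1−b) ≥ 0, H_{1j}(1−b) − H_{2j}·a ≥ 0, and −H_{1j}·b + H_{2j}(1−a) ≥ 0. Then a = 0 and b = 0. -/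
/-!
At an anchor row or column every constraint loses one of its two terms, so it fixes the sign of
`a` or `b`: the anchors `i₂` and `j₁` give `0 ≤ a` and `a ≤ 0`, the anchors `i₁` and `j₂` give
`0 ≤ b` and `b ≤ 0`.
-/

theorem eq_zero_of_mul_nonneg_of_mul_nonpos {R : Type*} [Semiring R] [LinearOrder R]
    [PosMulStrictMono R] {p q x : R} (hp : 0 < p) (hpx : 0 ≤ p * x) (hq : 0 < q)
    (hqx : q * x ≤ 0) : x = 0 :=
  le_antisymm (nonpos_of_mul_nonpos_right hqx hq) (nonneg_of_mul_nonneg_right hpx hp)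

theorem stmt_7_general (N M : ℕ)
    (W : Matrix (Fin N) (Fin 2) ℝ)
    (H : Matrix (Fin 2) (Fin M) ℝ)
    (j₁ : Fin M) (hj₁ : H 0 j₁ = 0) (hj₁' : 0 < H 1 j₁)
    (j₂ : Fin M) (hj₂ : H 1 j₂ = 0) (hj₂' : 0 < H 0 j₂)
    (i₁ : Fin N) (hi₁ : W i₁ 0 = 0) (hi₁' : 0 < W i₁ 1)
    (i₂ : Fin N) (hi₂ : W i₂ 1 = 0) (hi₂' : 0 < W i₂ 0)
    (a b : ℝ)
    (h1 : ∀ i : Fin N, 0 ≤ W i 0 * (1 - a) + W i 1 * b)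
    (h2 : ∀ i : Fin N, 0 ≤ W i 0 * a + W i 1 * (1 - b))
    (h3 : ∀ j : Fin M, 0 ≤ H 0 j * (1 - b) - H 1 j * a)
    (h4 : ∀ j : Fin M, 0 ≤ -(H 0 j) * b + H 1 j * (1 - a)) :
    a = 0 ∧ b = 0 := by
  have ha_nonneg : 0 ≤ W i₂ 0 * a := by simpa [hi₂] using h2 i₂
  have ha_nonpos : H 1 j₁ * a ≤ 0 := by simpa [hj₁] using h3 j₁
  have hb_nonneg : 0 ≤ W i₁ 1 * b := by simpa [hi₁] using h1 i₁
  have hb_nonpos : H 0 j₂ * b ≤ 0 := by simpa [hj₂] using h4 j₂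
  exact ⟨eq_zero_of_mul_nonneg_of_mul_nonpos hi₂' ha_nonneg hj₁' ha_nonpos,
    eq_zero_of_mul_nonneg_of_mul_nonpos hi₁' hb_nonneg hj₂' hb_nonpos⟩

/-- In the two-factor case with anchor words and anchor documents, the
non-negativity constraints on `W * A` and `A⁻¹ * H` (with `A = [[1-a, a],[b, 1-b]]` and
`1 - a - b > 0`) force `a = 0` and `b = 0`. -/
theorem stmt_7 (N M : ℕ)
    (W : Matrix (Fin N) (Fin 2) ℝ) (hW : ∀ i r, 0 ≤ W i r)
    (H : Matrix (Fin 2) (Fin M) ℝ) (hH : ∀ r j, 0 ≤ H r j)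
    (j₁ : Fin M) (hj₁ : H 0 j₁ = 0) (hj₁' : 0 < H 1 j₁)
    (j₂ : Fin M) (hj₂ : H 1 j₂ = 0) (hj₂' : 0 < H 0 j₂)
    (i₁ : Fin N) (hi₁ : W i₁ 0 = 0) (hi₁' : 0 < W i₁ 1)
    (i₂ : Fin N) (hi₂ : W i₂ 1 = 0) (hi₂' : 0 < W i₂ 0)
    (a b : ℝ) (hab : 0 < 1 - a - b)
    (h1 : ∀ i : Fin N, 0 ≤ W i 0 * (1 - a) + W i 1 * b)
    (h2 : ∀ i : Fin N, 0 ≤ W i 0 * a + W i 1 * (1 - b))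
    (h3 : ∀ j : Fin M, 0 ≤ H 0 j * (1 - b) - H 1 j * a)
    (h4 : ∀ j : Fin M, 0 ≤ -(H 0 j) * b + H 1 j * (1 - a)) :
    a = 0 ∧ b = 0 :=
  stmt_7_general N M W H j₁ hj₁ hj₁' j₂ hj₂ hj₂' i₁ hi₁ hi₁' i₂ hi₂ hi₂' a b h1 h2 h3 h4
end
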